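/- arXiv:1712.07640 — 2 statements merged into one kernel-verified Lean document; each statement's English description precedes it below -/
import Mathlib

section
/- Let 0 < r < 1, 0 < θr < 1, F > 0, and let H, α, β, τ, Γ be real. Then the derivative f'(0) of the replicator right-hand side f at the all-indiscriminate equilibrium x = 0 is negative (i.e., a population of indiscriminate poachers is evolutionarily stable) if and only if τ < (1/(1 − r^(N_r − 1))) · (F + H·θr·(1−r)^(1−β)·(1−r+r·θr)^(−α) − Γ·(1−r)^(1−β)/r)/F. -/
/-!
The factor `x (1 - x)` vanishes at `0`, so `f'(0)` is the payoff gap `u1 0 - u2 0`. Since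
`r ^ N_r = r * r ^ (N_r - 1)` with `N_r ≥ 2`, this gap is affine in `τ` with positive slope
`r (1 - r ^ (N_r - 1)) F (1 - r) ^ (β - 1)`, and solving the linear inequality gives the threshold.
-/

lemma one_lt_natCeil_one_div {θ : ℝ} (h0 : 0 < θ) (h1 : θ < 1) : 1 < ⌈1 / θ⌉₊ := by
  rw [Nat.lt_ceil, Nat.cast_one, lt_div_iff₀ h0]
  linarith

lemma deriv_replicator_at_zero {g : ℝ → ℝ} (hg : DifferentiableAt ℝ g 0) :
    deriv (fun x => x * (1 - x) * g x) 0 = g 0 := by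
  have h : HasDerivAt (fun x => x * (1 - x) * g x)
      ((1 * (1 - 0) + 0 * (0 - 1)) * g 0 + 0 * (1 - 0) * deriv g 0) 0 :=
    ((hasDerivAt_id' 0).mul ((hasDerivAt_const 0 1).sub (hasDerivAt_id' 0))).mul hg.hasDerivAt
  simpa using h.deriv

lemma payoff_gap_neg_iff {r θr F H A D τ Γ : ℝ} {n : ℕ} (hr0 : 0 < r) (hr1 : r < 1)
    (hn : 1 ≤ n) (hF : 0 < F) (hD : 0 < D) :
    (1 - r) * H * A - (r + τ * (1 - r)) * F * D -
        ((1 - r + r * θr) * H * A - τ * (1 - r ^ (n + 1)) * F * D - Γ) < 0 ↔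
      τ < 1 / (1 - r ^ n) * ((F + H * θr * D⁻¹ * A - Γ * D⁻¹ / r) / F) := by
  have hK : 0 < 1 - r ^ n := sub_pos.2 (pow_lt_one₀ hr0.le hr1 (by omega))
  have hgap : (1 - r) * H * A - (r + τ * (1 - r)) * F * D -
      ((1 - r + r * θr) * H * A - τ * (1 - r ^ (n + 1)) * F * D - Γ) =
      τ * (r * (1 - r ^ n) * F * D) - (r * F * D + r * θr * H * A - Γ) := by
    ring
  have hthreshold : 1 / (1 - r ^ n) * ((F + H * θr * D⁻¹ * A - Γ * D⁻¹ / r) / F) =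
      (r * F * D + r * θr * H * A - Γ) / (r * (1 - r ^ n) * F * D) := by
    field_simp
  rw [hgap, hthreshold, lt_div_iff₀ (by positivity), sub_neg]

/-- A population of indiscriminate poachers is evolutionarily stable (the derivative of
the replicator right-hand side at the all-indiscriminate equilibrium `x = 0` is negative)
if and only if the time-to-kill `τ` is below the stated threshold. -/
theorem indiscriminate_stability_iff
    (r θr F H α β τ Γ : ℝ)
    (hr0 : 0 < r) (hr1 : r < 1) (hθr0 : 0 < θr) (hθr1 : θr < 1) (hF : 0 < F) :
    let Nr : ℕ := ⌈1 / θr⌉₊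
    let θ : ℝ → ℝ := fun x => x * (1 - r) + (1 - x) * (1 - r + r * θr)
    let u1 : ℝ → ℝ := fun x =>
      (1 - r) * H * θ x ^ (-α) - (r + τ * (1 - r)) * F * (1 - r) ^ (β - 1)
    let u2 : ℝ → ℝ := fun x =>
      (1 - r + r * θr) * H * θ x ^ (-α) - τ * (1 - r ^ Nr) * F * (1 - r) ^ (β - 1) - Γ
    let f : ℝ → ℝ := fun x => x * (1 - x) * (u1 x - u2 x)
    deriv f 0 < 0 ↔
      τ < 1 / (1 - r ^ (Nr - 1)) *
        ((F + H * θr * (1 - r) ^ (1 - β) * (1 - r + r * θr) ^ (-α) -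
            Γ * (1 - r) ^ (1 - β) / r) / F) := by
  intro Nr θ u1 u2 f
  have hθ0 : θ 0 = 1 - r + r * θr := by simp [θ]
  have hθ0_ne : θ 0 ≠ 0 := by rw [hθ0]; nlinarith
  have hdiff : DifferentiableAt ℝ (fun x => u1 x - u2 x) 0 := by
    have : DifferentiableAt ℝ (fun x => θ x ^ (-α)) 0 :=
      DifferentiableAt.rpow_const (by fun_prop) (Or.inl hθ0_ne)
    fun_prop
  obtain ⟨n, hNr, hn⟩ : ∃ n, Nr = n + 1 ∧ 1 ≤ n :=
    ⟨Nr - 1, by have := one_lt_natCeil_one_div hθr0 hθr1; omega⟩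
  have hexp : (1 - r) ^ (1 - β) = ((1 - r) ^ (β - 1))⁻¹ := by
    rw [← Real.rpow_neg (by linarith), neg_sub]
  have hD : 0 < (1 - r) ^ (β - 1) := Real.rpow_pos_of_pos (by linarith) _
  rw [show deriv f 0 = u1 0 - u2 0 from deriv_replicator_at_zero hdiff, hexp]
  simp only [u1, u2, hθ0, hNr, Nat.add_sub_cancel]
  exact payoff_gap_neg_iff hr0 hr1 hn hF hD
end

section
/- Let 0 < θr < 1, F > 0, H ≥ 0, and fix real α, β, τ, and Γ = 0. Then there exists r₀ ∈ (0,1) such that for every r with r₀ < r < 1, the selective-stability condition fails: the derivative at x = 1 of the replicator right-hand side f_r (which depends on r) satisfies f_r'(1) ≥ 0. In particular, full devaluation of all rhinos cannot sustain a stable population of selective poachers. -/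
/-! Since `x (1 - x)` vanishes at `x = 1` with slope `-1`, the product rule gives
`f_r'(1) = -(u₁(1) - u₂(1))`. At `x = 1` the horn term of the gap `u₁ - u₂` is
`-r θr H (1 - r)^(-α) ≤ 0`, and its cost term is `(τ (r - r^N) - r) F (1 - r)^(β - 1)`,
whose coefficient tends to `-1` as `r → 1⁻`. So the gap is nonpositive for all `r`
close enough to `1`. -/

open Filter Topology Set

theorem deriv_mul_one_sub_mul_at_one {g : ℝ → ℝ} (hg : DifferentiableAt ℝ g 1) :
    deriv (fun x => x * (1 - x) * g x) 1 = -g 1 := by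
  have h : HasDerivAt (fun x => x * (1 - x) * g x) _ 1 :=
    ((hasDerivAt_id' 1).mul ((hasDerivAt_id' 1).const_sub 1)).mul hg.hasDerivAt
  rw [h.deriv, Pi.mul_apply]
  ring

theorem exists_mem_Ioo_forall_of_eventually_nhdsLT_one {p : ℝ → Prop}
    (h : ∀ᶠ r in 𝓝[<] (1 : ℝ), p r) :
    ∃ r₀ ∈ Ioo (0 : ℝ) 1, ∀ r, r₀ < r → r < 1 → p r := by
  obtain ⟨l, hl, hsub⟩ := mem_nhdsLT_iff_exists_Ioo_subset.1 h
  exact ⟨max l (1 / 2), ⟨by positivity, max_lt hl (by norm_num)⟩,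
    fun r hr₀ hr₁ => hsub ⟨(le_max_left _ _).trans_lt hr₀, hr₁⟩⟩

theorem eventually_nhdsLT_one_mul_sub_pow_sub_neg (τ : ℝ) (N : ℕ) :
    ∀ᶠ r in 𝓝[<] (1 : ℝ), τ * (r - r ^ N) - r < 0 := by
  have hcont : ContinuousAt (fun r : ℝ => τ * (r - r ^ N) - r) 1 := by fun_prop
  exact nhdsWithin_le_nhds (hcont.eventually_lt continuousAt_const (by norm_num))

theorem differentiableAt_one_rpow_devalued (θr p : ℝ) {r : ℝ} (hr : r < 1) :
    DifferentiableAt ℝ (fun x : ℝ => (x * (1 - r) + (1 - x) * (1 - r + r * θr)) ^ p) 1 := by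
  refine DifferentiableAt.rpow_const (by fun_prop) (Or.inl ?_)
  norm_num
  linarith

theorem payoff_gap_at_one_nonpos {θr F H α β τ r : ℝ} {N : ℕ} (hθr : 0 ≤ θr) (hF : 0 ≤ F)
    (hH : 0 ≤ H) (hr₀ : 0 ≤ r) (hr₁ : r < 1) (hcost : τ * (r - r ^ N) - r ≤ 0) :
    ((1 - r) * H * (1 - r) ^ (-α) - (r + τ * (1 - r)) * F * (1 - r) ^ (β - 1)) -
      ((1 - r + r * θr) * H * (1 - r) ^ (-α) - τ * (1 - r ^ N) * F * (1 - r) ^ (β - 1))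
      ≤ 0 := by
  have hP : 0 ≤ (1 - r) ^ (-α) := Real.rpow_nonneg (by linarith) _
  have hQ : 0 ≤ (1 - r) ^ (β - 1) := Real.rpow_nonneg (by linarith) _
  have horn : 0 ≤ r * θr * H * (1 - r) ^ (-α) := by positivity
  have cost : (τ * (r - r ^ N) - r) * (F * (1 - r) ^ (β - 1)) ≤ 0 :=
    mul_nonpos_of_nonpos_of_nonneg hcost (by positivity)
  linear_combination horn + cost

theorem full_devaluation_unstable_general
    (θr F H α β τ : ℝ) (hθr0 : 0 < θr) (hF : 0 < F) (hH : 0 ≤ H) :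
    ∃ r₀ ∈ Set.Ioo (0 : ℝ) 1, ∀ r : ℝ, r₀ < r → r < 1 →
      deriv
        (fun x : ℝ => x * (1 - x) *
          (((1 - r) * H * (x * (1 - r) + (1 - x) * (1 - r + r * θr)) ^ (-α) -
              (r + τ * (1 - r)) * F * (1 - r) ^ (β - 1)) -
            ((1 - r + r * θr) * H * (x * (1 - r) + (1 - x) * (1 - r + r * θr)) ^ (-α) -
              τ * (1 - r ^ (⌈1 / θr⌉₊ : ℕ)) * F * (1 - r) ^ (β - 1))))
        1 ≥ 0 := by
  obtain ⟨r₀, hr₀, hcost⟩ := exists_mem_Ioo_forall_of_eventually_nhdsLT_one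
    (eventually_nhdsLT_one_mul_sub_pow_sub_neg τ ⌈1 / θr⌉₊)
  refine ⟨r₀, hr₀, fun r hr₀r hr₁ => ?_⟩
  have hrpow := differentiableAt_one_rpow_devalued θr (-α) hr₁
  rw [deriv_mul_one_sub_mul_at_one (by fun_prop)]
  have hgap := payoff_gap_at_one_nonpos (α := α) (β := β) hθr0.le hF.le hH (hr₀.1.trans hr₀r).le hr₁
    (hcost r hr₀r hr₁).le
  have hθ : (1 : ℝ) * (1 - r) + (1 - 1) * (1 - r + r * θr) = 1 - r := by ring
  rw [hθ]
  linarith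

/-- With `Γ = 0`, there exists `r₀ ∈ (0,1)` such that for every `r ∈ (r₀, 1)` the
selective-stability condition fails: the derivative at `x = 1` of the replicator
right-hand side `f_r` is nonnegative. Full devaluation of all rhinos cannot sustain a
stable population of selective poachers. -/
theorem full_devaluation_unstable
    (θr F H α β τ : ℝ) (hθr0 : 0 < θr) (hθr1 : θr < 1) (hF : 0 < F) (hH : 0 ≤ H) :
    ∃ r₀ ∈ Set.Ioo (0 : ℝ) 1, ∀ r : ℝ, r₀ < r → r < 1 →
      deriv
        (fun x : ℝ => x * (1 - x) *
          (((1 - r) * H * (x * (1 - r) + (1 - x) * (1 - r + r * θr)) ^ (-α) -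
              (r + τ * (1 - r)) * F * (1 - r) ^ (β - 1)) -
            ((1 - r + r * θr) * H * (x * (1 - r) + (1 - x) * (1 - r + r * θr)) ^ (-α) -
              τ * (1 - r ^ (⌈1 / θr⌉₊ : ℕ)) * F * (1 - r) ^ (β - 1))))
        1 ≥ 0 :=
  full_devaluation_unstable_general θr F H α β τ hθr0 hF hH
end
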